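/- Let d = (1, 2, …, q−1, q, q^{(s_q)}, (q−1)^{(s_{q−1})}, …, 1^{(s_1)}) = (d_1, …, d_L) be the diagonal sequence of some partition of n, and set b_i = d_i − d_{i+1} for q ≤ i < L and b_L = d_L. If s_i ≥ 2 for all 1 ≤ i < q and s_q ≥ 1, then the number of partitions α of n with δ(α) = d equals ∏_{i=q}^{L} (b_i + 1). -/

import Mathlib

/-- The `i`-th part (1-indexed) of a partition given as a list of parts; `0` beyond the end. -/
def part (α : List ℕ) (i : ℕ) : ℕ := α.getD (i - 1) 0

/-- `α` is a partition of `n`: a nonincreasing list of positive integers summing to `n`. -/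
def IsPartition (n : ℕ) (α : List ℕ) : Prop :=
  α.Pairwise (· ≥ ·) ∧ (∀ x ∈ α, 0 < x) ∧ α.sum = n

/-- The `k`-th entry of the diagonal sequence of `α`:
`d_k = |{i : 1 ≤ i ≤ k and α_i + i - 1 ≥ k}|`. -/
def diag (α : List ℕ) (k : ℕ) : ℕ :=
  ((Finset.Icc 1 k).filter (fun i => k ≤ part α i + i - 1)).card

/-- The sequence `(1, 2, …, q-1, q, q^{(s_q)}, (q-1)^{(s_{q-1})}, …, 1^{(s_1)})` as a list,
where `s i` is the multiplicity of the entry `i` in the tail. -/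
def stairSeq (q : ℕ) (s : ℕ → ℕ) : List ℕ :=
  (List.range q).map (· + 1) ++
    (List.range q).reverse.flatMap fun j => List.replicate (s (j + 1)) (j + 1)

/-- `ᾱ_i = q - i + 1 + ∑_{k=i}^{q} s_k`. -/
def abar (q : ℕ) (s : ℕ → ℕ) (i : ℕ) : ℕ := q - i + 1 + ∑ k ∈ Finset.Icc i q, s k

/-- The list `ᾱ = (ᾱ_1, …, ᾱ_q)`. -/
def abarList (q : ℕ) (s : ℕ → ℕ) : List ℕ := (List.range q).map fun j => abar q s (j + 1)

/-- `b_i = d_i - d_{i+1}` (for `i = L` this equals `b_L = d_L`, since `d_{L+1} = 0`). -/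
def bseq (d : ℕ → ℕ) (i : ℕ) : ℕ := d i - d (i + 1)

def countGe (α : List ℕ) (j : ℕ) : ℕ := (α.filter (fun a => decide (j ≤ a))).length

def conj (α : List ℕ) : List ℕ := (List.range (part α 1)).map (fun j => countGe α (j+1))

lemma part_cons_one (a : ℕ) (l : List ℕ) : part (a :: l) 1 = a := rfl

lemma part_cons_of_two_le (a : ℕ) (l : List ℕ) (i : ℕ) (hi : 2 ≤ i) :
    part (a :: l) i = part l (i - 1) := by
  unfold part
  obtain ⟨m, rfl⟩ : ∃ m, i = m + 2 := ⟨i - 2, by omega⟩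
  have : m + 2 - 1 = m + 1 := by omega
  rw [this, List.getD_cons_succ]
  rfl

lemma part_eq_zero_of_gt (α : List ℕ) (i : ℕ) (hi : α.length < i) : part α i = 0 :=
  List.getD_eq_default _ _ (by omega)

lemma part_pos_of_le_length (α : List ℕ) (hpos : ∀ x ∈ α, 0 < x) (i : ℕ)
    (h1 : 1 ≤ i) (h2 : i ≤ α.length) : 0 < part α i := by
  have h : i - 1 < α.length := by omega
  rw [part, List.getD_eq_getElem _ _ h]
  exact hpos _ (List.getElem_mem h)

lemma mem_le_head (α : List ℕ) (hs : α.Pairwise (· ≥ ·)) (a : ℕ) (ha : a ∈ α) :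
    a ≤ part α 1 := by
  cases α with
  | nil => simp at ha
  | cons b l =>
    rw [part_cons_one]
    rcases List.mem_cons.1 ha with rfl | h
    · exact le_rfl
    · exact (List.pairwise_cons.1 hs).1 a h

lemma part_anti (α : List ℕ) (hs : α.Pairwise (· ≥ ·)) (i i' : ℕ) (h1 : 1 ≤ i) (h : i ≤ i') :
    part α i' ≤ part α i := by
  rcases lt_or_ge (i' - 1) α.length with hlt | hge
  · have hlt' : i - 1 < α.length := by omega
    rw [part, part, List.getD_eq_getElem _ _ hlt, List.getD_eq_getElem _ _ hlt']
    rcases eq_or_lt_of_le h with rfl | hlt2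
    · exact le_rfl
    · exact List.pairwise_iff_getElem.1 hs _ _ hlt' hlt (by omega)
  · rw [part, List.getD_eq_default _ _ hge]
    exact Nat.zero_le _

lemma countGe_cons (a : ℕ) (l : List ℕ) (j : ℕ) :
    countGe (a :: l) j = (if j ≤ a then 1 else 0) + countGe l j := by
  unfold countGe
  rcases le_or_gt j a with h | h
  · simp [List.filter_cons, h]; omega
  · simp [List.filter_cons, Nat.not_le.2 h, h]

lemma countGe_anti (α : List ℕ) (j j' : ℕ) (h : j ≤ j') : countGe α j' ≤ countGe α j := by
  induction α with
  | nil => simp [countGe]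
  | cons a l ih =>
    rw [countGe_cons, countGe_cons]
    have : (if j' ≤ a then 1 else 0) ≤ (if j ≤ a then 1 else 0) := by
      split <;> split <;> omega
    omega

lemma countGe_eq_zero (α : List ℕ) (j : ℕ) (h : ∀ x ∈ α, x < j) : countGe α j = 0 := by
  unfold countGe
  rw [List.filter_eq_nil_iff.2 (fun a ha => by simpa using Nat.not_le.2 (h a ha))]
  rfl

/-- The Galois-type correspondence. -/
lemma le_part_iff (α : List ℕ) (hs : α.Pairwise (· ≥ ·)) (i j : ℕ) (hi : 1 ≤ i) (hj : 1 ≤ j) :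
    j ≤ part α i ↔ i ≤ countGe α j := by
  induction α generalizing i with
  | nil =>
    simp only [part, List.getD_nil, countGe, List.filter_nil, List.length_nil]
    omega
  | cons a l ih =>
    have hsl := (List.pairwise_cons.1 hs).2
    have hmem := (List.pairwise_cons.1 hs).1
    rw [countGe_cons]
    rcases eq_or_lt_of_le hi with rfl | hi2
    · rw [part_cons_one]
      constructor
      · intro h; rw [if_pos h]; omega
      · intro h
        by_contra hc
        rw [if_neg hc, ← Nat.not_lt] at h
        exact h (by
          have : countGe l j = 0 := countGe_eq_zero l j (fun x hx => by
            have := hmem x hx; omega)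
          omega)
    · rw [part_cons_of_two_le _ _ i (by omega)]
      rw [ih hsl (i-1) (by omega)]
      rcases le_or_gt j a with h | h
      · rw [if_pos h]; omega
      · rw [if_neg (Nat.not_le.2 h)]
        have : countGe l j = 0 := countGe_eq_zero l j (fun x hx => by
          have := hmem x hx; omega)
        rw [this]
        omega

lemma part_conj (α : List ℕ) (hs : α.Pairwise (· ≥ ·)) (j : ℕ) (hj : 1 ≤ j) :
    part (conj α) j = countGe α j := by
  unfold conj
  rcases lt_or_ge (j - 1) (part α 1) with h | h
  · rw [part, List.getD_eq_getElem _ _ (by simpa using h)]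
    simp only [List.getElem_map, List.getElem_range]
    congr 1
    omega
  · rw [part, List.getD_eq_default _ _ (by simpa using h)]
    symm
    exact countGe_eq_zero _ _ (fun x hx => by
      have := mem_le_head α hs x hx; omega)

lemma conj_sorted (α : List ℕ) : (conj α).Pairwise (· ≥ ·) := by
  unfold conj
  rw [List.pairwise_map]
  exact List.pairwise_lt_range |>.imp (fun {a b} h => countGe_anti α _ _ (by omega))

lemma conj_pos (α : List ℕ) (hs : α.Pairwise (· ≥ ·)) : ∀ x ∈ conj α, 0 < x := by
  intro x hx
  unfold conj at hx
  obtain ⟨j, hj, rfl⟩ := List.mem_map.1 hx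
  rw [List.mem_range] at hj
  have : (1:ℕ) ≤ countGe α (j+1) := by
    rw [← le_part_iff α hs 1 (j+1) le_rfl (by omega)]
    omega
  omega

lemma conj_length (α : List ℕ) : (conj α).length = part α 1 := by
  simp [conj]

lemma countGe_one (α : List ℕ) (hpos : ∀ x ∈ α, 0 < x) : countGe α 1 = α.length := by
  unfold countGe
  rw [List.filter_eq_self.2 (fun a ha => by have := hpos a ha; simp; omega)]




-- two lists with positive entries and equal part functions are equal
lemma eq_of_part_eq (l m : List ℕ) (hl : ∀ x ∈ l, 0 < x) (hm : ∀ x ∈ m, 0 < x)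
    (h : ∀ i, 1 ≤ i → part l i = part m i) : l = m := by
  have hlen : l.length = m.length := by
    by_contra hc
    rcases Nat.lt_or_ge l.length m.length with hlt | hge
    · have h1 := part_eq_zero_of_gt l m.length (by omega)
      have h2 := part_pos_of_le_length m hm m.length (by omega) le_rfl
      rw [h _ (by omega)] at h1; omega
    · have hlt : m.length < l.length := by omega
      have h1 := part_eq_zero_of_gt m l.length (by omega)
      have h2 := part_pos_of_le_length l hl l.length (by omega) le_rfl
      rw [← h _ (by omega)] at h1; omega
  apply List.ext_getElem hlen
  intro n h1 h2
  have := h (n+1) (by omega)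
  rwa [part, part, Nat.add_sub_cancel, List.getD_eq_getElem _ _ h1,
    List.getD_eq_getElem _ _ h2] at this

lemma part_eq_of_le_iff (a b : ℕ) (h : ∀ j, 1 ≤ j → (j ≤ a ↔ j ≤ b)) : a = b := by
  rcases Nat.lt_trichotomy a b with hc | rfl | hc
  · have := (h b (by omega)).2 le_rfl; omega
  · rfl
  · have := (h a (by omega)).1 le_rfl; omega

lemma conj_conj (α : List ℕ) (hs : α.Pairwise (· ≥ ·)) (hpos : ∀ x ∈ α, 0 < x) :
    conj (conj α) = α := by
  apply eq_of_part_eq _ _ (conj_pos _ (conj_sorted α)) hpos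
  intro i hi
  apply part_eq_of_le_iff
  intro j hj
  rw [part_conj _ (conj_sorted α) i hi, ← le_part_iff (conj α) (conj_sorted α) j i hj hi,
    part_conj _ hs j hj, ← le_part_iff α hs i j hi hj]

lemma diag_zero (α : List ℕ) : diag α 0 = 0 := by simp [diag]

lemma diag_nil (k : ℕ) : diag [] k = 0 := by
  unfold diag
  rw [Finset.card_eq_zero, Finset.filter_eq_empty_iff]
  intro i hi
  rw [Finset.mem_Icc] at hi
  have : part [] i = 0 := by simp [part]
  omega

lemma diag_cons (a : ℕ) (l : List ℕ) (k : ℕ) (hk : 1 ≤ k) :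
    diag (a :: l) k = (if k ≤ a then 1 else 0) + diag l (k - 1) := by
  unfold diag
  have h1 : Finset.Icc 1 k = insert 1 (Finset.Icc 2 k) := by
    ext i; simp [Finset.mem_Icc]; omega
  rw [h1, Finset.filter_insert]
  have hcard : ((Finset.Icc 2 k).filter (fun i => k ≤ part (a :: l) i + i - 1)).card
      = ((Finset.Icc 1 (k-1)).filter (fun i => k - 1 ≤ part l i + i - 1)).card := by
    apply Finset.card_nbij' (fun i => i - 1) (fun i => i + 1)
    · intro i hi
      simp only [Finset.mem_coe, Finset.mem_filter, Finset.mem_Icc] at hi ⊢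
      rw [part_cons_of_two_le _ _ i (by omega)] at hi
      have hp := hi.2
      constructor
      · omega
      · set p := part l (i - 1) with hp2
        omega
    · intro i hi
      simp only [Finset.mem_coe, Finset.mem_filter, Finset.mem_Icc] at hi ⊢
      rw [part_cons_of_two_le _ _ (i+1) (by omega), Nat.add_sub_cancel]
      set p := part l i
      omega
    · intro i hi; simp only [Finset.mem_coe, Finset.mem_filter, Finset.mem_Icc] at hi; beta_reduce; omega
    · intro i hi; simp
  have hc1 : (k ≤ part (a :: l) 1 + 1 - 1) = (k ≤ a) := by rw [part_cons_one]; simp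
  by_cases h : k ≤ a
  · rw [if_pos (by rw [hc1]; exact h), Finset.card_insert_of_notMem (by simp), hcard,
      if_pos h]
    omega
  · rw [if_neg (by rw [hc1]; exact h), hcard, if_neg h]
    omega

lemma diag_conj (α : List ℕ) (hs : α.Pairwise (· ≥ ·)) (k : ℕ) :
    diag (conj α) k = diag α k := by
  unfold diag
  apply Finset.card_nbij' (fun i => k + 1 - i) (fun i => k + 1 - i)
  · intro i hi
    simp only [Finset.mem_coe, Finset.mem_filter, Finset.mem_Icc] at hi ⊢
    obtain ⟨⟨h1, h2⟩, h3⟩ := hi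
    refine ⟨⟨by omega, by omega⟩, ?_⟩
    have hcg : k + 1 - i ≤ countGe α i := by
      have hpc := part_conj α hs i h1
      rw [hpc] at h3
      set c := countGe α i
      omega
    have hle : i ≤ part α (k + 1 - i) :=
      (le_part_iff α hs (k + 1 - i) i (by omega) h1).2 hcg
    set p := part α (k + 1 - i)
    omega
  · intro j hj
    simp only [Finset.mem_coe, Finset.mem_filter, Finset.mem_Icc] at hj ⊢
    obtain ⟨⟨h1, h2⟩, h3⟩ := hj
    refine ⟨⟨by omega, by omega⟩, ?_⟩
    have hle : k + 1 - j ≤ part α j := by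
      set p := part α j
      omega
    have hcg : j ≤ countGe α (k + 1 - j) :=
      (le_part_iff α hs j (k + 1 - j) h1 (by omega)).1 hle
    rw [part_conj α hs (k + 1 - j) (by omega)]
    set c := countGe α (k + 1 - j)
    omega
  · intro i hi; simp only [Finset.mem_coe, Finset.mem_filter, Finset.mem_Icc] at hi; beta_reduce; omega
  · intro i hi; simp only [Finset.mem_coe, Finset.mem_filter, Finset.mem_Icc] at hi; beta_reduce; omega




lemma diag_pos (α : List ℕ) (hpos : ∀ x ∈ α, 0 < x) (hne : α ≠ []) :
    1 ≤ diag α α.length := by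
  have hlen : 1 ≤ α.length := List.length_pos_iff.2 hne
  have hp := part_pos_of_le_length α hpos α.length hlen le_rfl
  rw [diag]
  exact Finset.card_pos.2 ⟨α.length, Finset.mem_filter.2 ⟨Finset.mem_Icc.2 ⟨hlen, le_rfl⟩, by omega⟩⟩

lemma diag_ge_one (α : List ℕ) (i : ℕ) (h1 : 1 ≤ i) (hp : 1 ≤ part α i) :
    1 ≤ diag α (part α i + i - 1) := by
  rw [diag]
  exact Finset.card_pos.2 ⟨i, Finset.mem_filter.2 ⟨Finset.mem_Icc.2 ⟨h1, by omega⟩, le_rfl⟩⟩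

lemma part_le_sum (α : List ℕ) (i : ℕ) : part α i ≤ α.sum := by
  rcases lt_or_ge (i-1) α.length with h | h
  · rw [part, List.getD_eq_getElem _ _ h]
    exact List.single_le_sum (fun x _ => Nat.zero_le x) _ (List.getElem_mem h)
  · rw [part, List.getD_eq_default _ _ h]; exact Nat.zero_le _

lemma sum_part (α : List ℕ) : ∀ M, α.length ≤ M →
    ∑ i ∈ Finset.range M, α.getD i 0 = α.sum := by
  induction α with
  | nil => intro M _; simp
  | cons a l ih =>
    intro M hM
    obtain ⟨M', rfl⟩ : ∃ M', M = M' + 1 := ⟨M - 1, by simp at hM; omega⟩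
    rw [Finset.sum_range_succ']
    simp only [List.getD_cons_succ, List.getD_cons_zero]
    rw [ih M' (by simpa using hM), List.sum_cons, Nat.add_comm]

lemma sum_diag (α : List ℕ) (hpos : ∀ x ∈ α, 0 < x) (M : ℕ)
    (hM : α.sum + α.length + 1 ≤ M) :
    ∑ k ∈ Finset.Icc 1 M, diag α k = α.sum := by
  have hstep : ∀ k ∈ Finset.Icc 1 M, diag α k =
      ∑ i ∈ Finset.Icc 1 M, (if i ≤ k ∧ k ≤ part α i + i - 1 then 1 else 0) := by
    intro k hk
    rw [Finset.mem_Icc] at hk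
    rw [diag, Finset.card_filter]
    rw [show (Finset.Icc 1 k) = (Finset.Icc 1 M).filter (fun i => i ≤ k) by
      ext i; simp [Finset.mem_Icc, Finset.mem_filter]; omega]
    rw [Finset.sum_filter]
    apply Finset.sum_congr rfl
    intro i _
    by_cases h : i ≤ k <;> simp [h]
  rw [Finset.sum_congr rfl hstep, Finset.sum_comm]
  have hinner : ∀ i ∈ Finset.Icc 1 M,
      (∑ k ∈ Finset.Icc 1 M, if i ≤ k ∧ k ≤ part α i + i - 1 then 1 else 0) = part α i := by
    intro i hi
    rw [Finset.mem_Icc] at hi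
    rw [← Finset.card_filter]
    rcases le_or_gt i α.length with hle | hgt
    · have hp : 1 ≤ part α i := part_pos_of_le_length α hpos i hi.1 hle
      have hps : part α i ≤ α.sum := part_le_sum α i
      rw [show (Finset.Icc 1 M).filter (fun k => i ≤ k ∧ k ≤ part α i + i - 1)
          = Finset.Icc i (part α i + i - 1) by
        ext k; simp only [Finset.mem_Icc, Finset.mem_filter]
        have : i ≤ α.length := hle
        set p := part α i
        omega]
      rw [Nat.card_Icc]
      set p := part α i
      omega
    · have hp : part α i = 0 := part_eq_zero_of_gt α i hgt
      rw [show (Finset.Icc 1 M).filter (fun k => i ≤ k ∧ k ≤ part α i + i - 1)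
          = ∅ by
        ext k; simp only [Finset.mem_Icc, Finset.mem_filter, Finset.notMem_empty,
          iff_false, not_and]
        rw [hp]; omega]
      simp [hp]
  rw [Finset.sum_congr rfl hinner]
  -- ∑ i in Icc 1 M, part α i = α.sum
  have : ∑ i ∈ Finset.Icc 1 M, part α i = ∑ i ∈ Finset.range M, α.getD i 0 := by
    apply Finset.sum_nbij' (fun i => i - 1) (fun i => i + 1)
    · intro i hi; simp only [Finset.mem_Icc, Finset.mem_range] at *; omega
    · intro i hi; simp only [Finset.mem_Icc, Finset.mem_range] at *; omega
    · intro i hi; simp only [Finset.mem_Icc] at hi; omega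
    · intro i hi; simp
    · intro i hi; rfl
  rw [this, sum_part α M (by omega)]



def Tq (q : ℕ) (s : ℕ → ℕ) (j : ℕ) : ℕ := q + ∑ m ∈ Finset.Icc j q, s m

def Dfun (q : ℕ) (s : ℕ → ℕ) (k : ℕ) : ℕ :=
  if k ≤ q then k else ((Finset.Icc 1 q).filter (fun j => k ≤ Tq q s j)).card

lemma Dfun_zero (q : ℕ) (s : ℕ → ℕ) : Dfun q s 0 = 0 := by simp [Dfun]

lemma Tq_anti (q : ℕ) (s : ℕ → ℕ) (j j' : ℕ) (h : j ≤ j') : Tq q s j' ≤ Tq q s j := by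
  unfold Tq
  have : Finset.Icc j' q ⊆ Finset.Icc j q := by
    intro x hx; simp only [Finset.mem_Icc] at *; omega
  exact Nat.add_le_add_left (Finset.sum_le_sum_of_subset this) q

lemma Dfun_zero_of_gt (q : ℕ) (s : ℕ → ℕ) (k : ℕ) (hk : Tq q s 1 < k) : Dfun q s k = 0 := by
  have hq : q ≤ Tq q s 1 := Nat.le_add_right _ _
  rw [Dfun, if_neg (by omega), Finset.card_eq_zero, Finset.filter_eq_empty_iff]
  intro j hj
  rw [Finset.mem_Icc] at hj
  have := Tq_anti q s 1 j hj.1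
  omega

lemma Dfun_near_top (q : ℕ) (s : ℕ → ℕ) (hq : 1 ≤ q) (k : ℕ)
    (hk1 : k ≤ Tq q s 1) (hk2 : Tq q s 1 < k + s 1) : Dfun q s k = 1 := by
  have hT2 : ∀ j, 2 ≤ j → j ≤ q → Tq q s j + s 1 ≤ Tq q s 1 := by
    intro j h2 hjq
    have : Finset.Icc j q ⊆ Finset.Icc 2 q := by
      intro x hx; simp only [Finset.mem_Icc] at *; omega
    have h1 : Tq q s j ≤ Tq q s 2 := Tq_anti q s 2 j h2
    have h2' : Tq q s 2 + s 1 = Tq q s 1 := by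
      unfold Tq
      have : Finset.Icc 1 q = insert 1 (Finset.Icc 2 q) := by
        ext x; simp only [Finset.mem_Icc, Finset.mem_insert]; omega
      rw [this, Finset.sum_insert (by simp)]
      ring
    omega
  have hkq : q < k := by
    have : Tq q s 2 + s 1 ≤ Tq q s 1 + s 1 := by
      have := Tq_anti q s 1 2 (by omega); omega
    rcases Nat.eq_or_lt_of_le hq with rfl | hq2
    · -- q = 1 : Tq 1 s 1 = 1 + s 1, k + s 1 > 1 + s 1 so k > 1 = q
      have : Tq 1 s 1 = 1 + s 1 := by simp [Tq]
      omega
    · have := hT2 2 le_rfl (by omega)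
      have h12 := Tq_anti q s 1 2 (by omega)
      -- Tq q s 2 ≥ q +  ... ≥ q; and k + s 1 > Tq 1 = Tq 2 + s1 ≥ q + s 1
      have hq2' : q ≤ Tq q s 2 := Nat.le_add_right _ _
      omega
  rw [Dfun, if_neg (by omega)]
  rw [show (Finset.Icc 1 q).filter (fun j => k ≤ Tq q s j) = {1} by
    ext j
    simp only [Finset.mem_filter, Finset.mem_Icc, Finset.mem_singleton]
    constructor
    · rintro ⟨⟨hj1, hjq⟩, hjk⟩
      by_contra hne
      have := hT2 j (by omega) hjq
      omega
    · rintro rfl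
      exact ⟨⟨le_rfl, hq⟩, hk1⟩]
  rfl

/-- arithmetic recursion for Dfun removing the top value -/
lemma Dfun_top_rec (q : ℕ) (s : ℕ → ℕ) (k : ℕ) :
    Dfun (q+1) s k = if k ≤ q then k else if k ≤ q + 1 + s (q+1) then q + 1
      else Dfun q s (k - 1 - s (q+1)) := by
  have hsum : ∀ j, j ≤ q + 1 → Tq (q+1) s j = q + 1 + (∑ m ∈ Finset.Icc j q, s m) + s (q+1) := by
    intro j hj
    unfold Tq
    rw [Finset.sum_Icc_succ_top (by omega)]
    ring
  rcases le_or_gt k q with h | h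
  · rw [if_pos h, Dfun, if_pos (by omega)]
  rw [if_neg (by omega)]
  rcases le_or_gt k (q+1) with h2 | h2
  · have : k = q + 1 := by omega
    subst this
    rw [if_pos (by omega), Dfun, if_pos le_rfl]
  rcases le_or_gt k (q + 1 + s (q+1)) with h3 | h3
  · rw [if_pos h3, Dfun, if_neg (by omega)]
    rw [show (Finset.Icc 1 (q+1)).filter (fun j => k ≤ Tq (q+1) s j) = Finset.Icc 1 (q+1) by
      apply Finset.filter_true_of_mem
      intro j hj
      rw [Finset.mem_Icc] at hj
      rw [hsum j hj.2]
      omega]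
    rw [Nat.card_Icc]
    omega
  · rw [if_neg (by omega), Dfun, if_neg (by omega), Dfun, if_neg (by omega)]
    congr 1
    ext j
    simp only [Finset.mem_filter, Finset.mem_Icc]
    constructor
    · rintro ⟨⟨h1, hq1⟩, hk⟩
      have hjq : j ≤ q := by
        rcases Nat.eq_or_lt_of_le hq1 with rfl | _
        · exfalso
          rw [hsum (q+1) le_rfl] at hk
          simp at hk
          omega
        · omega
      refine ⟨⟨h1, hjq⟩, ?_⟩
      rw [hsum j (by omega)] at hk
      unfold Tq
      omega
    · rintro ⟨⟨h1, hjq⟩, hk⟩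
      refine ⟨⟨h1, by omega⟩, ?_⟩
      rw [hsum j (by omega)]
      unfold Tq at hk
      omega

/-- stairSeq structural recursion -/
lemma stairSeq_succ (q : ℕ) (s : ℕ → ℕ) :
    stairSeq (q+1) s = ((List.range q).map (· + 1)) ++
      (List.replicate (s (q+1) + 1) (q+1) ++
        (List.range q).reverse.flatMap fun j => List.replicate (s (j + 1)) (j + 1)) := by
  unfold stairSeq
  rw [List.range_succ, List.reverse_append]
  simp only [List.map_append, List.reverse_cons, List.reverse_nil, List.nil_append,
    List.flatMap_cons, List.map_cons, List.map_nil]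
  rw [List.flatMap_append, List.append_assoc]
  congr 1
  rw [← List.append_assoc]
  congr 1
  simp [List.replicate_succ]

lemma stairSeq_getD (q : ℕ) (s : ℕ → ℕ) : ∀ k, 1 ≤ k →
    (stairSeq q s).getD (k-1) 0 = Dfun q s k := by
  induction q generalizing s with
  | zero =>
    intro k hk
    have h1 : stairSeq 0 s = [] := by simp [stairSeq]
    rw [h1, Dfun, if_neg (by omega)]
    simp
  | succ q ih =>
    intro k hk
    rw [stairSeq_succ, Dfun_top_rec]
    have hlen1 : ((List.range q).map (· + 1)).length = q := by simp
    rcases le_or_gt k q with h | h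
    · rw [if_pos h, List.getD_append _ _ _ _ (by omega),
        List.getD_eq_getElem _ _ (by omega)]
      simp only [List.getElem_map, List.getElem_range]
      omega
    rw [if_neg (by omega), List.getD_append_right _ _ _ _ (by omega), hlen1]
    have hlen2 : (List.replicate (s (q+1) + 1) (q+1)).length = s (q+1) + 1 := by simp
    rcases le_or_gt k (q + 1 + s (q+1)) with h2 | h2
    · rw [if_pos h2, List.getD_append _ _ _ _ (by rw [hlen2]; omega),
        List.getD_eq_getElem _ _ (by rw [hlen2]; omega)]
      simp
    · rw [if_neg (by omega), List.getD_append_right _ _ _ _ (by rw [hlen2]; omega), hlen2]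
      have := ih s (k - 1 - s (q+1)) (by omega)
      rw [stairSeq] at this
      rw [List.getD_append_right _ _ _ _ (by rw [hlen1]; omega), hlen1] at this
      rw [show k - 1 - q - (s (q+1) + 1) = k - 1 - s (q+1) - 1 - q by omega]
      exact this

lemma sum_shift (q : ℕ) (s : ℕ → ℕ) (j : ℕ) :
    ∑ m ∈ Finset.Icc j q, s (m+1) = ∑ m ∈ Finset.Icc (j+1) (q+1), s m := by
  apply Finset.sum_nbij' (fun i => i + 1) (fun i => i - 1)
  · intro i hi; simp only [Finset.mem_Icc] at *; omega
  · intro i hi; simp only [Finset.mem_Icc] at *; omega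
  · intro i _; omega
  · intro i hi; simp only [Finset.mem_Icc] at hi; omega
  · intro i _; rfl

lemma Tq_shift (q : ℕ) (s : ℕ → ℕ) (j : ℕ) :
    Tq q (fun i => s (i+1)) j + 1 = Tq (q+1) s (j+1) := by
  unfold Tq
  rw [sum_shift]
  ring

lemma Dfun_shift (q : ℕ) (s : ℕ → ℕ) (k : ℕ) :
    Dfun (q+1) s k = (if 1 ≤ k ∧ k ≤ Tq (q+1) s 1 then 1 else 0)
      + Dfun q (fun i => s (i+1)) (k-1) := by
  rcases Nat.eq_zero_or_pos k with rfl | hk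
  · simp [Dfun]
  have hT1 : q + 1 ≤ Tq (q+1) s 1 := Nat.le_add_right _ _
  rcases le_or_gt k (q+1) with h | h
  · have e1 : Dfun (q+1) s k = k := by rw [Dfun, if_pos h]
    have e2 : Dfun q (fun i => s (i+1)) (k-1) = k - 1 := by rw [Dfun, if_pos (by omega)]
    rw [e1, e2, if_pos ⟨hk, by omega⟩]
    omega
  · have e1 : Dfun (q+1) s k
        = ((Finset.Icc 1 (q+1)).filter (fun j => k ≤ Tq (q+1) s j)).card := by
      rw [Dfun, if_neg (by omega)]
    have e2 : Dfun q (fun i => s (i+1)) (k-1)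
        = ((Finset.Icc 1 q).filter (fun j => k - 1 ≤ Tq q (fun i => s (i+1)) j)).card := by
      rw [Dfun, if_neg (by omega)]
    rw [e1, e2]
    have hsplit : Finset.Icc 1 (q+1) = insert 1 (Finset.Icc 2 (q+1)) := by
      ext x; simp only [Finset.mem_Icc, Finset.mem_insert]; omega
    rw [hsplit, Finset.filter_insert]
    have hcard : ((Finset.Icc 2 (q+1)).filter (fun j => k ≤ Tq (q+1) s j)).card =
        ((Finset.Icc 1 q).filter (fun j => k - 1 ≤ Tq q (fun i => s (i+1)) j)).card := by
      apply Finset.card_nbij' (fun j => j - 1) (fun j => j + 1)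
      · intro j hj
        simp only [Finset.mem_coe, Finset.mem_filter, Finset.mem_Icc] at *
        obtain ⟨⟨h1, h2⟩, h3⟩ := hj
        refine ⟨⟨by omega, by omega⟩, ?_⟩
        have := Tq_shift q s (j - 1)
        rw [show j - 1 + 1 = j by omega] at this
        omega
      · intro j hj
        simp only [Finset.mem_coe, Finset.mem_filter, Finset.mem_Icc] at hj
        obtain ⟨⟨h1, h2⟩, h3⟩ := hj
        have := Tq_shift q s j
        simp only [Finset.mem_coe, Finset.mem_filter, Finset.mem_Icc]
        exact ⟨⟨by omega, by omega⟩, by omega⟩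
      · intro j hj; simp only [Finset.mem_coe, Finset.mem_filter, Finset.mem_Icc] at hj; beta_reduce; omega
      · intro j _; beta_reduce; omega
    by_cases hc : k ≤ Tq (q+1) s 1
    · rw [if_pos hc, if_pos ⟨hk, hc⟩, Finset.card_insert_of_notMem (by simp), hcard]
      omega
    · rw [if_neg hc, if_neg (by omega), hcard]
      omega

def solList : ℕ → (ℕ → ℕ) → List (List ℕ)
  | 0, _ => [[]]
  | (q+1), s =>
      (solList q (fun i => s (i+1))).map (fun β => (Tq (q+1) s 1) :: β) ++
      (solList q (fun i => s (i+1))).map (fun β => conj ((Tq (q+1) s 1) :: β))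

lemma solList_length (q : ℕ) : ∀ s, (solList q s).length = 2^q := by
  induction q with
  | zero => intro s; rfl
  | succ q ih => intro s; simp [solList, ih]; ring

def SolSet (q : ℕ) (s : ℕ → ℕ) : Set (List ℕ) :=
  {α | α.Pairwise (· ≥ ·) ∧ (∀ x ∈ α, 0 < x) ∧ ∀ k, 1 ≤ k → diag α k = Dfun q s k}

lemma part_bound {q : ℕ} {s : ℕ → ℕ} {α : List ℕ} (hα : α ∈ SolSet q s) :
    ∀ i, 1 ≤ i → i ≤ α.length → part α i + i - 1 ≤ Tq q s 1 := by
  obtain ⟨hsort, hpos, hd⟩ := hα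
  intro i h1 h2
  by_contra hc
  have hp : 1 ≤ part α i := part_pos_of_le_length α hpos i h1 h2
  have h3 := diag_ge_one α i h1 hp
  rw [hd _ (by omega), Dfun_zero_of_gt q s _ (by omega)] at h3
  omega

lemma length_bound {q : ℕ} {s : ℕ → ℕ} {α : List ℕ} (hα : α ∈ SolSet q s) :
    α.length ≤ Tq q s 1 := by
  rcases Nat.eq_zero_or_pos α.length with h | h
  · omega
  · have hp : 1 ≤ part α α.length := part_pos_of_le_length α hα.2.1 _ h le_rfl
    have := part_bound hα α.length h le_rfl
    omega

lemma Tq_one_split (q : ℕ) (s : ℕ → ℕ) :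
    Tq (q+1) s 1 = Tq q (fun i => s (i+1)) 1 + s 1 + 1 := by
  have h2 : Tq q (fun i => s (i+1)) 1 + 1 = Tq (q+1) s 2 := Tq_shift q s 1
  have h3 : Tq (q+1) s 1 = Tq (q+1) s 2 + s 1 := by
    unfold Tq
    rw [show Finset.Icc 1 (q+1) = insert 1 (Finset.Icc 2 (q+1)) by
      ext x; simp only [Finset.mem_Icc, Finset.mem_insert]; omega,
      Finset.sum_insert (by simp)]
    ring
  omega

lemma conj_mem_SolSet {q : ℕ} {s : ℕ → ℕ} {α : List ℕ} (hα : α ∈ SolSet q s) :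
    conj α ∈ SolSet q s :=
  ⟨conj_sorted _, conj_pos _ hα.1, fun k hk => by
    rw [diag_conj _ hα.1]; exact hα.2.2 k hk⟩

lemma cons_mem_SolSet {q : ℕ} {s : ℕ → ℕ} {β : List ℕ}
    (hβ : β ∈ SolSet q (fun i => s (i+1))) :
    (Tq (q+1) s 1 :: β) ∈ SolSet (q+1) s := by
  have hT := Tq_one_split q s
  obtain ⟨hsort, hpos, hd⟩ := hβ
  refine ⟨?_, ?_, ?_⟩
  · rw [List.pairwise_cons]
    refine ⟨?_, hsort⟩
    intro b hb
    have h1 := mem_le_head β hsort b hb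
    have h2 : part β 1 ≤ Tq q (fun i => s (i+1)) 1 := by
      have hne : β ≠ [] := by rintro rfl; simp at hb
      have hlen : 1 ≤ β.length := List.length_pos_iff.2 hne
      have := part_bound (q := q) (s := fun i => s (i+1)) ⟨hsort, hpos, hd⟩ 1 le_rfl hlen
      omega
    omega
  · intro x hx
    rcases List.mem_cons.1 hx with rfl | h
    · have : q + 1 ≤ Tq (q+1) s 1 := Nat.le_add_right _ _
      omega
    · exact hpos x h
  · intro k hk
    rw [diag_cons _ _ k hk, Dfun_shift q s k]
    have hdk : diag β (k-1) = Dfun q (fun i => s (i+1)) (k-1) := by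
      rcases Nat.eq_or_lt_of_le hk with h | h
    -- k = 1 or k ≥ 2
      · rw [← h]; simp [diag_zero, Dfun_zero]
      · exact hd (k-1) (by omega)
    rw [hdk]
    congr 1
    split <;> split <;> omega

lemma main_induction (q : ℕ) : ∀ s : ℕ → ℕ, (∀ i, 1 ≤ i → i < q → 2 ≤ s i) →
    (1 ≤ q → 1 ≤ s q) →
    (SolSet q s = {α | α ∈ solList q s}) ∧ (solList q s).Nodup := by
  induction q with
  | zero =>
    intro s _ _
    constructor
    · ext α
      simp only [SolSet, Set.mem_setOf_eq, solList, List.mem_singleton]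
      constructor
      · rintro ⟨hsort, hpos, hd⟩
        by_contra hne
        have h1 := diag_pos α hpos hne
        rw [hd _ (List.length_pos_iff.2 hne)] at h1
        rw [Dfun, if_neg (by have := List.length_pos_iff.2 hne; omega)] at h1
        simp at h1
      · rintro rfl
        refine ⟨List.Pairwise.nil, by simp, fun k hk => ?_⟩
        rw [diag_nil, Dfun, if_neg (by omega)]
        simp
    · simp [solList]
  | succ q ih =>
    intro s hs hsq
    have hs1 : 1 ≤ s 1 := by
      rcases Nat.eq_zero_or_pos q with rfl | h
      · exact hsq le_rfl
      · have := hs 1 le_rfl (by omega); omega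
    have hsq1 : 1 ≤ s (q+1) := hsq (by omega)
    obtain ⟨ihset, ihnodup⟩ := ih (fun i => s (i+1))
      (fun i h1 h2 => by simpa using hs (i+1) (by omega) (by omega))
      (fun hq => by simpa using hsq (by omega))
    have hT := Tq_one_split q s
    have hLq : q + 1 ≤ Tq (q+1) s 1 := Nat.le_add_right _ _
    have hL'q : q ≤ Tq q (fun i => s (i+1)) 1 := Nat.le_add_right _ _
    have hLs : q + 1 + s (q+1) ≤ Tq (q+1) s 1 := by
      unfold Tq
      have : s (q+1) ≤ ∑ m ∈ Finset.Icc 1 (q+1), s m :=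
        Finset.single_le_sum (fun i _ => Nat.zero_le (s i)) (Finset.mem_Icc.2 ⟨by omega, le_rfl⟩)
      omega
    have hmem_sol : ∀ β ∈ solList q (fun i => s (i+1)), β ∈ SolSet q (fun i => s (i+1)) := by
      intro β h; rw [ihset]; exact h
    have headclaim : ∀ α ∈ SolSet (q+1) s, part α 1 = Tq (q+1) s 1 →
        α ∈ (solList q (fun i => s (i+1))).map (fun β => Tq (q+1) s 1 :: β) := by
      intro α hα hhead
      obtain ⟨hsort, hpos, hd⟩ := hα
      have hne : α ≠ [] := by
        rintro rfl
        simp [part] at hhead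
        omega
      obtain ⟨a, β, rfl⟩ := List.exists_cons_of_ne_nil hne
      have ha : a = Tq (q+1) s 1 := by rw [← part_cons_one a β, hhead]
      subst ha
      have hβ : β ∈ SolSet q (fun i => s (i+1)) := by
        refine ⟨(List.pairwise_cons.1 hsort).2, fun x hx => hpos x (List.mem_cons_of_mem _ hx), ?_⟩
        intro k hk
        have h2 := hd (k+1) (by omega)
        rw [diag_cons _ _ _ (by omega), Dfun_shift q s (k+1)] at h2
        simp only [Nat.add_sub_cancel] at h2
        have he : (if (k+1) ≤ Tq (q+1) s 1 then (1:ℕ) else 0)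
            = (if 1 ≤ k+1 ∧ k+1 ≤ Tq (q+1) s 1 then 1 else 0) := by
          split <;> split <;> omega
        omega
      rw [ihset] at hβ
      exact List.mem_map.2 ⟨β, hβ, rfl⟩
    constructor
    · ext α
      simp only [Set.mem_setOf_eq, solList, List.mem_append]
      constructor
      · intro hα
        obtain ⟨hsort, hpos, hd⟩ := hα
        have hα' : α ∈ SolSet (q+1) s := ⟨hsort, hpos, hd⟩
        have hdL : Dfun (q+1) s (Tq (q+1) s 1) = 1 :=
          Dfun_near_top (q+1) s (by omega) _ le_rfl (by omega)
        have hne : α ≠ [] := by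
          rintro rfl
          have := hd (Tq (q+1) s 1) (by omega)
          rw [diag_nil] at this
          omega
        have hlen1 : 1 ≤ α.length := List.length_pos_iff.2 hne
        have hlenL : α.length ≤ Tq (q+1) s 1 := length_bound hα'
        have hcard : ((Finset.Icc 1 (Tq (q+1) s 1)).filter
            (fun i => Tq (q+1) s 1 ≤ part α i + i - 1)).card = 1 := by
          have := hd (Tq (q+1) s 1) (by omega)
          rw [diag] at this
          omega
        obtain ⟨i₀, hi₀⟩ := Finset.card_eq_one.1 hcard
        have hi₀mem : i₀ ∈ (Finset.Icc 1 (Tq (q+1) s 1)).filter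
            (fun i => Tq (q+1) s 1 ≤ part α i + i - 1) := by
          rw [hi₀]; exact Finset.mem_singleton_self i₀
        rw [Finset.mem_filter, Finset.mem_Icc] at hi₀mem
        obtain ⟨⟨h1i, hiL⟩, hfi⟩ := hi₀mem
        have hpi : 1 ≤ part α i₀ := by
          by_contra hc
          omega
        have hit : i₀ ≤ α.length := by
          by_contra hc
          rw [part_eq_zero_of_gt α i₀ (by omega)] at hpi
          omega
        have hfi' : part α i₀ + i₀ - 1 ≤ Tq (q+1) s 1 := part_bound hα' i₀ h1i hit
        rcases eq_or_lt_of_le h1i with h1 | h2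
        · -- i₀ = 1 : head = L
          left
          apply headclaim α hα'
          rw [← h1] at hfi hfi'
          omega
        · -- 2 ≤ i₀
          have hi₀L : i₀ = Tq (q+1) s 1 := by
            by_contra hc
            have hs12 : 2 ≤ s 1 := by
              rcases Nat.eq_zero_or_pos q with hq0 | hqpos
              · have hTq0 : Tq (q+1) s 1 = 1 + s 1 := by
                  subst hq0
                  show Tq 1 s 1 = 1 + s 1
                  unfold Tq
                  rw [Finset.Icc_self, Finset.sum_singleton]
                omega
              · exact hs 1 le_rfl (by omega)
            have hdL1 : Dfun (q+1) s (Tq (q+1) s 1 - 1) = 1 :=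
              Dfun_near_top (q+1) s (by omega) _ (by omega) (by omega)
            have hmem1 : i₀ - 1 ∈ (Finset.Icc 1 (Tq (q+1) s 1 - 1)).filter
                (fun i => Tq (q+1) s 1 - 1 ≤ part α i + i - 1) := by
              rw [Finset.mem_filter, Finset.mem_Icc]
              have hpa := part_anti α hsort (i₀ - 1) i₀ (by omega) (by omega)
              refine ⟨⟨by omega, by omega⟩, by omega⟩
            have hmem2 : i₀ ∈ (Finset.Icc 1 (Tq (q+1) s 1 - 1)).filter
                (fun i => Tq (q+1) s 1 - 1 ≤ part α i + i - 1) := by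
              rw [Finset.mem_filter, Finset.mem_Icc]
              refine ⟨⟨by omega, by omega⟩, by omega⟩
            have h2c : 2 ≤ ((Finset.Icc 1 (Tq (q+1) s 1 - 1)).filter
                (fun i => Tq (q+1) s 1 - 1 ≤ part α i + i - 1)).card :=
              Finset.one_lt_card.2 ⟨i₀ - 1, hmem1, i₀, hmem2, by omega⟩
            have := hd (Tq (q+1) s 1 - 1) (by omega)
            rw [diag] at this
            omega
          have hlen : α.length = Tq (q+1) s 1 := by omega
          have hpart1 : part α i₀ = 1 := by omega
          right
          have hγ : conj α ∈ SolSet (q+1) s := conj_mem_SolSet hα'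
          have hγhead : part (conj α) 1 = Tq (q+1) s 1 := by
            rw [part_conj α hsort 1 le_rfl, countGe_one α hpos, hlen]
          obtain ⟨β, hβmem, heq⟩ := List.mem_map.1 (headclaim (conj α) hγ hγhead)
          refine List.mem_map.2 ⟨β, hβmem, ?_⟩
          rw [heq, conj_conj α hsort hpos]
      · intro h
        rcases h with h | h <;> obtain ⟨β, hβ, rfl⟩ := List.mem_map.1 h
        · exact cons_mem_SolSet (hmem_sol β hβ)
        · exact conj_mem_SolSet (cons_mem_SolSet (hmem_sol β hβ))
    · -- Nodup
      rw [solList]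
      apply List.Nodup.append
      · exact ihnodup.map (fun x y h => by simpa using h)
      · apply List.Nodup.map_on _ ihnodup
        intro x hx y hy hxy
        have hx' := cons_mem_SolSet (hmem_sol x hx)
        have hy' := cons_mem_SolSet (hmem_sol y hy)
        have := conj_conj _ hx'.1 hx'.2.1
        rw [hxy, conj_conj _ hy'.1 hy'.2.1] at this
        simpa using this.symm
      · intro x hx hy
        obtain ⟨β₁, hβ₁, rfl⟩ := List.mem_map.1 hx
        obtain ⟨β₂, hβ₂, heq⟩ := List.mem_map.1 hy
        have hx2 := cons_mem_SolSet (hmem_sol β₂ hβ₂)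
        have hlen2 : β₂.length ≤ Tq q (fun i => s (i+1)) 1 := length_bound (hmem_sol β₂ hβ₂)
        have h1 : part (Tq (q+1) s 1 :: β₁) 1 = Tq (q+1) s 1 := part_cons_one _ _
        have h2 : part (conj (Tq (q+1) s 1 :: β₂)) 1 = β₂.length + 1 := by
          rw [part_conj _ hx2.1 1 le_rfl, countGe_one _ hx2.2.1]
          simp
        rw [heq] at h2
        omega

lemma prod_lemma (q : ℕ) : ∀ s : ℕ → ℕ, (∀ j, 1 ≤ j → j ≤ q → 1 ≤ s j) →
    ∏ i ∈ Finset.Icc q (Tq q s 1), (Dfun q s i - Dfun q s (i+1) + 1) = 2^q := by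
  induction q with
  | zero =>
    intro s _
    have h0 : Tq 0 s 1 = 0 := by simp [Tq]
    rw [h0, Finset.Icc_self, Finset.prod_singleton]
    simp [Dfun]
  | succ q ih =>
    intro s hs1
    have ihs := ih (fun i => s (i+1))
      (fun j a b => by simpa using hs1 (j+1) (by omega) (by omega))
    have hT := Tq_one_split q s
    have hL'q : q ≤ Tq q (fun i => s (i+1)) 1 := Nat.le_add_right _ _
    have hs11 : 1 ≤ s 1 := hs1 1 le_rfl (by omega)
    have hLq2 : q + 2 ≤ Tq (q+1) s 1 := by omega
    have hterm : ∀ i, q+1 ≤ i → i ≤ Tq (q+1) s 1 - 1 →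
        Dfun (q+1) s i - Dfun (q+1) s (i+1) + 1
          = Dfun q (fun i => s (i+1)) (i-1) - Dfun q (fun i => s (i+1)) i + 1 := by
      intro i h1 h2
      rw [Dfun_shift q s i, Dfun_shift q s (i+1)]
      rw [if_pos ⟨by omega, by omega⟩, if_pos ⟨by omega, by omega⟩]
      simp only [Nat.add_sub_cancel]
      omega
    have htop : Dfun (q+1) s (Tq (q+1) s 1) - Dfun (q+1) s (Tq (q+1) s 1 + 1) + 1 = 2 := by
      have hz1 : Dfun q (fun i => s (i+1)) (Tq (q+1) s 1 - 1) = 0 :=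
        Dfun_zero_of_gt q _ _ (by omega)
      have hz2 : Dfun q (fun i => s (i+1)) (Tq (q+1) s 1 + 1 - 1) = 0 :=
        Dfun_zero_of_gt q _ _ (by omega)
      rw [Dfun_shift q s (Tq (q+1) s 1), Dfun_shift q s (Tq (q+1) s 1 + 1)]
      rw [if_pos ⟨by omega, le_rfl⟩, if_neg (by omega), hz1, hz2]
    have hsplit : Finset.Icc (q+1) (Tq (q+1) s 1)
        = insert (Tq (q+1) s 1) (Finset.Icc (q+1) (Tq (q+1) s 1 - 1)) := by
      ext x; simp only [Finset.mem_Icc, Finset.mem_insert]; omega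
    have h1 : ∏ i ∈ Finset.Icc (q+1) (Tq (q+1) s 1 - 1),
        (Dfun (q+1) s i - Dfun (q+1) s (i+1) + 1)
        = ∏ i ∈ Finset.Icc (q+1) (Tq (q+1) s 1 - 1),
          (Dfun q (fun i => s (i+1)) (i-1) - Dfun q (fun i => s (i+1)) i + 1) :=
      Finset.prod_congr rfl (fun i hi => by
        rw [Finset.mem_Icc] at hi
        exact hterm i hi.1 hi.2)
    have hre : ∏ i ∈ Finset.Icc (q+1) (Tq (q+1) s 1 - 1),
        (Dfun q (fun i => s (i+1)) (i-1) - Dfun q (fun i => s (i+1)) i + 1)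
        = ∏ j ∈ Finset.Icc q (Tq (q+1) s 1 - 2),
          (Dfun q (fun i => s (i+1)) j - Dfun q (fun i => s (i+1)) (j+1) + 1) := by
      apply Finset.prod_nbij' (fun i => i - 1) (fun j => j + 1)
      · intro i hi; simp only [Finset.mem_Icc] at *; omega
      · intro j hj; simp only [Finset.mem_Icc] at *; omega
      · intro i hi; simp only [Finset.mem_Icc] at hi; omega
      · intro j _; omega
      · intro i hi
        simp only [Finset.mem_Icc] at hi
        rw [show i - 1 + 1 = i by omega]
    have hsub : ∏ j ∈ Finset.Icc q (Tq (q+1) s 1 - 2),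
        (Dfun q (fun i => s (i+1)) j - Dfun q (fun i => s (i+1)) (j+1) + 1)
        = ∏ j ∈ Finset.Icc q (Tq q (fun i => s (i+1)) 1),
          (Dfun q (fun i => s (i+1)) j - Dfun q (fun i => s (i+1)) (j+1) + 1) := by
      symm
      apply Finset.prod_subset
      · intro x hx; simp only [Finset.mem_Icc] at *; omega
      · intro x hx hnx
        simp only [Finset.mem_Icc] at hx hnx
        rw [Dfun_zero_of_gt q _ x (by omega), Dfun_zero_of_gt q _ (x+1) (by omega)]
        rfl
    rw [hsplit, Finset.prod_insert (by simp only [Finset.mem_Icc]; omega), htop,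
      h1, hre, hsub, ihs]
    ring

/-- Corollary 14(2): if `d = (1, …, q, q^{(s_q)}, …, 1^{(s_1)})` is the diagonal sequence of
some partition of `n`, `s_i ≥ 2` for all `1 ≤ i < q`, and `s_q ≥ 1`, then the number of
partitions of `n` with diagonal sequence `d` is `∏_{i=q}^{L} (b_i + 1)`,
where `L = q + s_1 + … + s_q`. -/
theorem card_diag_class_of_gaps (n q : ℕ) (hq : 1 ≤ q) (s : ℕ → ℕ)
    (hs : ∀ i, 1 ≤ i → i < q → 2 ≤ s i) (hsq : 1 ≤ s q)
    (hex : ∃ β, IsPartition n β ∧ ∀ k, 1 ≤ k → diag β k = (stairSeq q s).getD (k - 1) 0) :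
    {α : List ℕ | IsPartition n α ∧
        ∀ k, 1 ≤ k → diag α k = (stairSeq q s).getD (k - 1) 0}.ncard =
      ∏ i ∈ Finset.Icc q (q + ∑ j ∈ Finset.Icc 1 q, s j),
        (bseq (fun k => (stairSeq q s).getD (k - 1) 0) i + 1) := by
  obtain ⟨β, hβpart, hβdiag⟩ := hex
  have hβd : ∀ k, 1 ≤ k → diag β k = Dfun q s k := fun k hk => by
    rw [hβdiag k hk, stairSeq_getD q s k hk]
  obtain ⟨hmainset, hmainnodup⟩ := main_induction q s hs (fun _ => hsq)
  have hset : {α : List ℕ | IsPartition n α ∧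
      ∀ k, 1 ≤ k → diag α k = (stairSeq q s).getD (k - 1) 0} = SolSet q s := by
    ext α
    simp only [Set.mem_setOf_eq]
    constructor
    · rintro ⟨⟨h1, h2, h3⟩, h4⟩
      exact ⟨h1, h2, fun k hk => (h4 k hk).trans (stairSeq_getD q s k hk)⟩
    · rintro ⟨h1, h2, h3⟩
      refine ⟨⟨h1, h2, ?_⟩, fun k hk => by rw [h3 k hk, ← stairSeq_getD q s k hk]⟩
      have hn : β.sum = n := hβpart.2.2
      have e1 := sum_diag α h2 (α.sum + α.length + (β.sum + β.length) + 1) (by omega)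
      have e2 := sum_diag β hβpart.2.1 (α.sum + α.length + (β.sum + β.length) + 1) (by omega)
      have e3 : ∑ k ∈ Finset.Icc 1 (α.sum + α.length + (β.sum + β.length) + 1), diag α k
          = ∑ k ∈ Finset.Icc 1 (α.sum + α.length + (β.sum + β.length) + 1), diag β k :=
        Finset.sum_congr rfl (fun k hk => by
          rw [Finset.mem_Icc] at hk
          rw [h3 k hk.1, hβd k hk.1])
      omega
  rw [hset, hmainset]
  have hfin : {α : List ℕ | α ∈ solList q s} = ↑(solList q s).toFinset := by
    ext x; simp
  rw [hfin, Set.ncard_coe_finset, List.toFinset_card_of_nodup hmainnodup, solList_length]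
  have hs1' : ∀ j, 1 ≤ j → j ≤ q → 1 ≤ s j := by
    intro j h1 h2
    rcases eq_or_lt_of_le h2 with rfl | h
    · exact hsq
    · have := hs j h1 h; omega
  have hprod : ∏ i ∈ Finset.Icc q (Tq q s 1),
      (bseq (fun k => (stairSeq q s).getD (k-1) 0) i + 1) = 2^q := by
    rw [← prod_lemma q s hs1']
    apply Finset.prod_congr rfl
    intro i hi
    rw [Finset.mem_Icc] at hi
    have hi1 : 1 ≤ i := by omega
    unfold bseq
    beta_reduce
    rw [show (stairSeq q s).getD (i - 1) 0 = Dfun q s i from stairSeq_getD q s i hi1,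
      show (stairSeq q s).getD (i + 1 - 1) 0 = Dfun q s (i+1) from stairSeq_getD q s (i+1) (by omega)]
  exact hprod.symm
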